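/- Every connected and co-connected claw-free CIS graph is both gem-free and W_4-free. -/

import Mathlib

open SimpleGraph

namespace SimpleGraph

/-- A matching in `G`, viewed as a set of pairwise disjoint edges of `G`. -/
def IsMatchingSet {V : Type*} (G : SimpleGraph V) (M : Set (Sym2 V)) : Prop :=
  M ⊆ G.edgeSet ∧ ∀ e ∈ M, ∀ f ∈ M, e ≠ f → ∀ v : V, ¬(v ∈ e ∧ v ∈ f)

/-- A matching (set of edges) `M` saturates a vertex `v` if some edge of `M` contains `v`. -/
def SaturatedBy {V : Type*} (M : Set (Sym2 V)) (v : V) : Prop := ∃ e ∈ M, v ∈ e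

/-- A perfect internal matching: a matching of `G` saturating every vertex of degree ≥ 2. -/
def IsPerfectInternalMatching {V : Type*} (G : SimpleGraph V) (M : Set (Sym2 V)) : Prop :=
  G.IsMatchingSet M ∧ ∀ v : V, 2 ≤ (G.neighborSet v).ncard → SaturatedBy M v

/-- A graph is randomly internally matchable if every maximal matching is a
perfect internal matching. -/
def RandomlyInternallyMatchable {V : Type*} (G : SimpleGraph V) : Prop :=
  ∀ M : Set (Sym2 V), Maximal G.IsMatchingSet M → G.IsPerfectInternalMatching M

/-- A stable (independent) set: pairwise non-adjacent vertices. -/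
def IsStableSet {V : Type*} (G : SimpleGraph V) (S : Set V) : Prop :=
  S.Pairwise fun u v => ¬ G.Adj u v

/-- A CIS graph: every maximal clique intersects every maximal stable set. -/
def IsCIS {V : Type*} (G : SimpleGraph V) : Prop :=
  ∀ C S : Set V, Maximal G.IsClique C → Maximal G.IsStableSet S → (C ∩ S).Nonempty

/-- `G` is `H`-free: no induced subgraph of `G` is isomorphic to `H`. -/
def InducedFree {V W : Type*} (G : SimpleGraph V) (H : SimpleGraph W) : Prop :=
  ∀ s : Set V, ¬ Nonempty (H ≃g (G.induce s))

/-- `G` is a leaf extension with core set `S`: every vertex outside `S` has degree exactly one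
with its unique neighbor in `S`, and every vertex of `S` has a neighbor outside `S`. -/
def IsLeafExtension {V : Type*} (G : SimpleGraph V) (S : Set V) : Prop :=
  (∀ v ∉ S, (G.neighborSet v).ncard = 1 ∧ ∀ u : V, G.Adj v u → u ∈ S) ∧
  ∀ s ∈ S, ∃ v ∉ S, G.Adj s v

/-- No two distinct vertices have equal closed neighborhoods. -/
def TrueTwinFree {V : Type*} (G : SimpleGraph V) : Prop :=
  ∀ x y : V, (∀ z : V, (G.Adj x z ∨ x = z) ↔ (G.Adj y z ∨ y = z)) → x = y

/-- The corona `G ∘ K₁`: for each vertex `v` of `G` add a new pendant vertex adjacent to `v`. -/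
def corona {V : Type*} (G : SimpleGraph V) : SimpleGraph (V ⊕ V) :=
  SimpleGraph.fromRel fun a b =>
    match a, b with
    | Sum.inl u, Sum.inl v => G.Adj u v
    | Sum.inl u, Sum.inr v => u = v
    | _, _ => False

/-- The graph obtained from `H` by gluing a new triangle vertex along each edge of `H`. -/
def glueTriangles {V : Type*} (H : SimpleGraph V) : SimpleGraph (V ⊕ H.edgeSet) :=
  SimpleGraph.fromRel fun a b =>
    match a, b with
    | Sum.inl u, Sum.inl v => H.Adj u v
    | Sum.inl u, Sum.inr e => u ∈ (e : Sym2 V)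
    | _, _ => False

/-- The clique number: maximum size of a clique. -/
noncomputable def cliqueNumber {V : Type*} (G : SimpleGraph V) : ℕ :=
  sSup {n | ∃ C : Set V, G.IsClique C ∧ C.ncard = n}

/-- The stability (independence) number: maximum size of a stable set. -/
noncomputable def stabilityNumber {V : Type*} (G : SimpleGraph V) : ℕ :=
  sSup {n | ∃ S : Set V, G.IsStableSet S ∧ S.ncard = n}

/-- The matching number: maximum size of a matching. -/
noncomputable def matchingNumber {V : Type*} (G : SimpleGraph V) : ℕ :=
  sSup {n | ∃ M : Set (Sym2 V), G.IsMatchingSet M ∧ M.ncard = n}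

end SimpleGraph

/-- The claw `K_{1,3}`. -/
def clawGraph : SimpleGraph (Fin 1 ⊕ Fin 3) := completeBipartiteGraph (Fin 1) (Fin 3)

/-- The gem: the path `0-1-2-3` together with the universal vertex `4`. -/
def gemGraph : SimpleGraph (Fin 5) :=
  SimpleGraph.fromRel fun a b =>
    b = 4 ∨ (a = 0 ∧ b = 1) ∨ (a = 1 ∧ b = 2) ∨ (a = 2 ∧ b = 3)

/-- The 4-wheel `W₄`: the cycle `0-1-2-3-0` together with the universal vertex `4`. -/
def wheel4Graph : SimpleGraph (Fin 5) :=
  SimpleGraph.fromRel fun a b =>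
    b = 4 ∨ (a = 0 ∧ b = 1) ∨ (a = 1 ∧ b = 2) ∨ (a = 2 ∧ b = 3) ∨ (a = 3 ∧ b = 0)

/-- The disjoint union of `p` copies of `K₂` and `q` copies of `K₁`. -/
def pK2qK1 (p q : ℕ) : SimpleGraph ((Fin p × Fin 2) ⊕ Fin q) :=
  SimpleGraph.fromRel fun a b => ∃ i : Fin p, a = Sum.inl (i, 0) ∧ b = Sum.inl (i, 1)


/-!
In a CIS graph every clique `K` and stable set `I` admit a vertex adjacent to all of `K` and to
none of `I`: a common point of a maximal clique containing `K` and a maximal stable set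
containing `I`. For a gem `a-b-c-d` with hub `u`, such a vertex for `K = {b, c, u}` and
`I = {a, d}` is the fourth leaf of a claw centred at `u`.

For a `W₄` with rim `p-q-r-s` and hub `t`, the same device together with claw- and
gem-freeness shows that a vertex adjacent to exactly one of `p, r` is adjacent to `q, s, t`.
Propagating along the edges of `G`, every vertex is adjacent to both ends of a diagonal of the
rim; hence a non-neighbour `v` of `p` is adjacent to `q, s, t`, so that `v-q-p-s` with hub `t` is
again a `W₄`. Propagating "`x` is a rim vertex of a `W₄` with `q`, `s` and hub `t`" along the
edges of `Gᶜ` reaches `q`, which is absurd.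
-/

theorem Set.Pairwise.exists_maximal_superset {α : Type*} {r : α → α → Prop} {s : Set α}
    (hs : s.Pairwise r) : ∃ t, s ⊆ t ∧ Maximal (fun u : Set α => u.Pairwise r) t :=
  zorn_subset_nonempty {u | u.Pairwise r}
    (fun _ hc hchain _ => ⟨_, hchain.pairwise_sUnion.2 hc, fun _ => Set.subset_sUnion_of_mem⟩)
    s hs

namespace SimpleGraph

variable {V W : Type*} {G : SimpleGraph V}

theorem Reachable.of_forall_adj {P : V → Prop} {u v : V} (huv : G.Reachable u v)
    (hP : ∀ x y, G.Adj x y → P x → P y) (hu : P u) : P v := by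
  rw [reachable_iff_reflTransGen] at huv
  induction huv with
  | refl => exact hu
  | tail _ hxy ih => exact hP _ _ hxy ih

theorem inducedFree_iff_not_isIndContained {H : SimpleGraph W} :
    G.InducedFree H ↔ ¬H ⊴ G := by
  simp [InducedFree, isIndContained_iff_exists_iso_induce]

theorem InducedFree.false_of_claw (h : G.InducedFree clawGraph) {c x y z : V}
    (hx : G.Adj c x) (hy : G.Adj c y) (hz : G.Adj c z)
    (hxy : ¬G.Adj x y) (hxz : ¬G.Adj x z) (hyz : ¬G.Adj y z)
    (nxy : x ≠ y) (nxz : x ≠ z) (nyz : y ≠ z) : False := by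
  let f : Fin 1 ⊕ Fin 3 → V := Sum.elim (fun _ => c) ![x, y, z]
  have hf : f.Injective := by
    rintro (a | a) (b | b) hab <;> fin_cases a <;> fin_cases b <;>
      simp_all [f, hx.ne, hy.ne, hz.ne, hx.ne.symm, hy.ne.symm, hz.ne.symm]
  refine inducedFree_iff_not_isIndContained.1 h ⟨⟨⟨f, hf⟩, fun {a b} => ?_⟩⟩
  change G.Adj (f a) (f b) ↔ _
  rcases a with a | a <;> rcases b with b | b <;> fin_cases a <;> fin_cases b <;>
    simp_all [f, clawGraph, G.adj_comm]

theorem IsCIS.exists_adj_of_isClique_of_isIndepSet (hG : G.IsCIS) {K I : Set V}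
    (hK : G.IsClique K) (hI : G.IsIndepSet I) :
    ∃ x, (∀ k ∈ K, x ≠ k → G.Adj x k) ∧ ∀ i ∈ I, ¬G.Adj x i := by
  obtain ⟨C, hKC, hC⟩ := hK.exists_maximal_superset
  obtain ⟨S, hIS, hS⟩ := hI.exists_maximal_superset
  obtain ⟨x, hxC, hxS⟩ := hG C S hC hS
  exact ⟨x, fun k hk hxk => hC.1 hxC (hKC hk) hxk,
    fun i hi hxi => hS.1 hxS (hIS hi) hxi.ne hxi⟩

structure IsInducedGem (G : SimpleGraph V) (a b c d u : V) : Prop where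
  adj_ab : G.Adj a b
  adj_bc : G.Adj b c
  adj_cd : G.Adj c d
  not_adj_ac : ¬G.Adj a c
  not_adj_ad : ¬G.Adj a d
  not_adj_bd : ¬G.Adj b d
  ne_ac : a ≠ c
  ne_ad : a ≠ d
  ne_bd : b ≠ d
  adj_ua : G.Adj u a
  adj_ub : G.Adj u b
  adj_uc : G.Adj u c
  adj_ud : G.Adj u d

structure IsInducedW4 (G : SimpleGraph V) (p q r s t : V) : Prop where
  adj_pq : G.Adj p q
  adj_qr : G.Adj q r
  adj_rs : G.Adj r s
  adj_sp : G.Adj s p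
  not_adj_pr : ¬G.Adj p r
  not_adj_qs : ¬G.Adj q s
  ne_pr : p ≠ r
  ne_qs : q ≠ s
  adj_tp : G.Adj t p
  adj_tq : G.Adj t q
  adj_tr : G.Adj t r
  adj_ts : G.Adj t s

theorem IsInducedGem.of_embedding (f : gemGraph ↪g G) :
    G.IsInducedGem (f 0) (f 1) (f 2) (f 3) (f 4) := by
  constructor <;> simp only [f.map_adj_iff, f.injective.ne_iff] <;> simp [gemGraph]

theorem IsInducedW4.of_embedding (f : wheel4Graph ↪g G) :
    G.IsInducedW4 (f 0) (f 1) (f 2) (f 3) (f 4) := by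
  constructor <;> simp only [f.map_adj_iff, f.injective.ne_iff] <;> simp [wheel4Graph]

theorem not_isInducedGem (hclaw : G.InducedFree clawGraph) (hcis : G.IsCIS) {a b c d u : V} :
    ¬G.IsInducedGem a b c d u := by
  intro h
  have hK : G.IsClique {b, c, u} := by
    simp [isClique_insert, h.adj_bc, h.adj_ub.symm, h.adj_uc.symm]
  have hI : G.IsIndepSet {a, d} :=
    Set.pairwise_pair.2 fun _ => ⟨h.not_adj_ad, fun hda => h.not_adj_ad hda.symm⟩
  obtain ⟨x, hxK, hxI⟩ := hcis.exists_adj_of_isClique_of_isIndepSet hK hI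
  simp only [Set.mem_insert_iff, Set.mem_singleton_iff, forall_eq_or_imp, forall_eq] at hxK hxI
  obtain ⟨hxb, hxc, hxu⟩ := hxK
  obtain ⟨hxa, hxd⟩ := hxI
  have hxu' : x ≠ u := by rintro rfl; exact hxa h.adj_ua
  have hxa' : x ≠ a := by rintro rfl; exact h.not_adj_ac (hxc h.ne_ac)
  have hxd' : x ≠ d := by rintro rfl; exact h.not_adj_bd (hxb h.ne_bd.symm).symm
  exact hclaw.false_of_claw h.adj_ua h.adj_ud (hxu hxu').symm h.not_adj_ad
    (fun hax => hxa hax.symm) (fun hdx => hxd hdx.symm) h.ne_ad hxa'.symm hxd'.symm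

namespace IsInducedW4

variable {p q r s t : V}

theorem rotate (h : G.IsInducedW4 p q r s t) : G.IsInducedW4 q r s p t :=
  ⟨h.adj_qr, h.adj_rs, h.adj_sp, h.adj_pq, h.not_adj_qs, fun hrp => h.not_adj_pr hrp.symm,
    h.ne_qs, h.ne_pr.symm, h.adj_tq, h.adj_tr, h.adj_ts, h.adj_tp⟩

theorem swap (h : G.IsInducedW4 p q r s t) : G.IsInducedW4 r q p s t :=
  ⟨h.adj_qr.symm, h.adj_pq.symm, h.adj_sp.symm, h.adj_rs.symm, fun hrp => h.not_adj_pr hrp.symm,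
    h.not_adj_qs, h.ne_pr.symm, h.ne_qs, h.adj_tr, h.adj_tq, h.adj_tp, h.adj_ts⟩

variable (hclaw : G.InducedFree clawGraph) (hcis : G.IsCIS)
include hclaw hcis

theorem adj_and_adj_hub_of_adj_of_not_adj (h : G.IsInducedW4 p q r s t) {w : V}
    (hwr : G.Adj w r) (hwp : ¬G.Adj w p) : G.Adj w q ∧ G.Adj w t := by
  by_contra hwqt
  have hK : G.IsClique {q, r, t} := by
    simp [isClique_insert, h.adj_qr, h.adj_tq.symm, h.adj_tr.symm]
  have hI : G.IsIndepSet {p, w} :=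
    Set.pairwise_pair.2 fun _ => ⟨fun hpw => hwp hpw.symm, hwp⟩
  obtain ⟨x, hxK, hxI⟩ := hcis.exists_adj_of_isClique_of_isIndepSet hK hI
  simp only [Set.mem_insert_iff, Set.mem_singleton_iff, forall_eq_or_imp, forall_eq] at hxK hxI
  obtain ⟨hxp, hxw⟩ := hxI
  have hxq : G.Adj x q := hxK.1 (by rintro rfl; exact hxp h.adj_pq.symm)
  have hxr : G.Adj x r := hxK.2.1 (by rintro rfl; exact hxw hwr.symm)
  have hxt : G.Adj x t := hxK.2.2 (by rintro rfl; exact hxp h.adj_tp)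
  have hxp' : x ≠ p := by rintro rfl; exact h.not_adj_pr hxr
  have hxw' : x ≠ w := by rintro rfl; exact hwqt ⟨hxq, hxt⟩
  have hwp' : w ≠ p := by rintro rfl; exact h.not_adj_pr hwr
  by_cases hxs : G.Adj x s
  · -- `p, x, w` are pairwise non-adjacent, so `w` misses `q` and `s`;
    -- then `q, s, w` is a claw at `r`
    have hwq : ¬G.Adj w q := fun hwq => hclaw.false_of_claw h.adj_pq.symm hxq.symm hwq.symm
      (fun hpx => hxp hpx.symm) (fun hpw => hwp hpw.symm) hxw hxp'.symm hwp'.symm hxw'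
    have hws : ¬G.Adj w s := fun hws => hclaw.false_of_claw h.adj_sp hxs.symm hws.symm
      (fun hpx => hxp hpx.symm) (fun hpw => hwp hpw.symm) hxw hxp'.symm hwp'.symm hxw'
    exact hclaw.false_of_claw h.adj_qr.symm h.adj_rs hwr.symm h.not_adj_qs
      (fun hqw => hwq hqw.symm) (fun hsw => hws hsw.symm) h.ne_qs
      (by rintro rfl; exact hwp h.adj_pq.symm) (by rintro rfl; exact hwp h.adj_sp)
  · exact not_isInducedGem hclaw hcis ⟨hxq, h.adj_pq.symm, h.adj_sp.symm, hxp, hxs,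
      h.not_adj_qs, hxp', (by rintro rfl; exact h.not_adj_qs hxq.symm), h.ne_qs, hxt.symm,
      h.adj_tq, h.adj_tp, h.adj_ts⟩

theorem adj_of_adj_of_not_adj (h : G.IsInducedW4 p q r s t) {w : V}
    (hwr : G.Adj w r) (hwp : ¬G.Adj w p) : G.Adj w q ∧ G.Adj w s ∧ G.Adj w t := by
  obtain ⟨hwq, hwt⟩ := h.adj_and_adj_hub_of_adj_of_not_adj hclaw hcis hwr hwp
  refine ⟨hwq, ?_, hwt⟩
  by_contra hws
  exact not_isInducedGem hclaw hcis ⟨hwq, h.adj_pq.symm, h.adj_sp.symm, hwp, hws, h.not_adj_qs,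
    (by rintro rfl; exact h.not_adj_pr hwr), (by rintro rfl; exact hwp h.adj_sp), h.ne_qs,
    hwt.symm, h.adj_tq, h.adj_tp, h.adj_ts⟩

theorem adj_and_adj_or_adj_and_adj_of_adj (h : G.IsInducedW4 p q r s t) {z v : V}
    (hz : G.Adj z p ∧ G.Adj z r) (hzv : G.Adj z v) :
    (G.Adj v p ∧ G.Adj v r) ∨ (G.Adj v q ∧ G.Adj v s) := by
  by_cases hvp : G.Adj v p <;> by_cases hvr : G.Adj v r
  · exact .inl ⟨hvp, hvr⟩
  · obtain ⟨hvs, hvq, -⟩ := h.rotate.rotate.adj_of_adj_of_not_adj hclaw hcis hvp hvr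
    exact .inr ⟨hvq, hvs⟩
  · obtain ⟨hvq, hvs, -⟩ := h.adj_of_adj_of_not_adj hclaw hcis hvr hvp
    exact .inr ⟨hvq, hvs⟩
  · rcases eq_or_ne v p with rfl | hv_p
    · exact .inr ⟨h.adj_pq, h.adj_sp.symm⟩
    rcases eq_or_ne v r with rfl | hv_r
    · exact .inr ⟨h.adj_qr.symm, h.adj_rs⟩
    exact (hclaw.false_of_claw hzv hz.1 hz.2 hvp hvr h.not_adj_pr hv_p hv_r h.ne_pr).elim

theorem adj_and_adj_or_adj_and_adj (hconn : G.Connected) (h : G.IsInducedW4 p q r s t)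
    (v : V) : (G.Adj v p ∧ G.Adj v r) ∨ (G.Adj v q ∧ G.Adj v s) := by
  refine (hconn.preconnected p v).of_forall_adj (P := fun w => (G.Adj w p ∧ G.Adj w r) ∨
    (G.Adj w q ∧ G.Adj w s)) (fun z w hz hzw => ?_) (.inr ⟨h.adj_pq, h.adj_sp.symm⟩)
  rcases hzw with hzpr | hzqs
  · exact h.adj_and_adj_or_adj_and_adj_of_adj hclaw hcis hzpr hz
  · exact (h.rotate.adj_and_adj_or_adj_and_adj_of_adj hclaw hcis hzqs hz).symm.imp_left
      And.symm

theorem adj_of_not_adj (hconn : G.Connected) (h : G.IsInducedW4 p q r s t) {v : V}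
    (hvp' : v ≠ p) (hvr' : v ≠ r) (hvp : ¬G.Adj v p) : G.Adj v q ∧ G.Adj v s ∧ G.Adj v t := by
  obtain ⟨hvq, hvs⟩ := (h.adj_and_adj_or_adj_and_adj hclaw hcis hconn v).resolve_left
    fun hvpr => hvp hvpr.1
  have hvr : G.Adj v r := by
    by_contra hvr
    exact hclaw.false_of_claw hvq.symm h.adj_pq.symm h.adj_qr hvp hvr h.not_adj_pr hvp' hvr'
      h.ne_pr
  exact ⟨hvq, hvs, (h.adj_of_adj_of_not_adj hclaw hcis hvr hvp).2.2⟩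

end IsInducedW4

theorem not_isInducedW4 (hconn : G.Connected) (hcoconn : Gᶜ.Connected)
    (hclaw : G.InducedFree clawGraph) (hcis : G.IsCIS) {p q r s t : V} :
    ¬G.IsInducedW4 p q r s t := by
  intro h
  have step : ∀ x v, Gᶜ.Adj x v → (∃ y, G.IsInducedW4 x q y s t) →
      ∃ y, G.IsInducedW4 v q y s t := by
    rintro x v ⟨hxv, hxv'⟩ ⟨y, hy⟩
    rcases eq_or_ne v y with rfl | hvy
    · exact ⟨x, hy.swap⟩
    obtain ⟨hvq, hvs, hvt⟩ :=
      hy.adj_of_not_adj hclaw hcis hconn hxv.symm hvy fun hvx => hxv' hvx.symm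
    exact ⟨x, hvq, hy.adj_pq.symm, hy.adj_sp.symm, hvs.symm, fun hvx => hxv' hvx.symm,
      hy.not_adj_qs, hxv.symm, hy.ne_qs, hvt.symm, hy.adj_tq, hy.adj_tp, hy.adj_ts⟩
  obtain ⟨y, hy⟩ := (hcoconn.preconnected p q).of_forall_adj step ⟨r, h⟩
  exact G.irrefl hy.adj_pq

end SimpleGraph

theorem stmt_4_general {V : Type*} (G : SimpleGraph V)
    (hconn : G.Connected) (hcoconn : Gᶜ.Connected)
    (hclaw : G.InducedFree clawGraph) (hcis : G.IsCIS) :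
    G.InducedFree gemGraph ∧ G.InducedFree wheel4Graph := by
  simp only [inducedFree_iff_not_isIndContained]
  exact ⟨fun ⟨f⟩ => not_isInducedGem hclaw hcis (.of_embedding f),
    fun ⟨f⟩ => not_isInducedW4 hconn hcoconn hclaw hcis (.of_embedding f)⟩

/-- Every connected and co-connected claw-free CIS graph is gem-free and `W₄`-free. -/
theorem stmt_4 {V : Type*} [Fintype V] (G : SimpleGraph V)
    (hconn : G.Connected) (hcoconn : Gᶜ.Connected)
    (hclaw : G.InducedFree clawGraph) (hcis : G.IsCIS) :
    G.InducedFree gemGraph ∧ G.InducedFree wheel4Graph :=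
  stmt_4_general G hconn hcoconn hclaw hcis
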